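/- Let 0 < n < 1, 1 < γ < 2, ρ > 0 and z ∈ [0,1). Define φ(t) = e^{(n−1)t} and H(t) = (1−z) · φ(t) · ( 1 + (ρ/(1−n)) · (1 − φ(t)^{γ−1}) · (1−z)^{γ−1} )^{1/(1−γ)}. Then H(0) = 1 − z and H satisfies the ordinary differential equation H′(t) + (1−n) H(t) + ρ H(t)^γ = 0 for all t ≥ 0. -/

import Mathlib

open Real

/-!
This is a Bernoulli equation: `v = H ^ (1 - γ)` solves the linear equation
`v' = (1 - γ) (-((1 - n) v + ρ))`, whose solution is explicit, and `H` is recovered as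
`v ^ (1 / (1 - γ))`. Since `n < 1`, `γ > 1` and `ρ > 0`, `v` stays positive for `t ≥ 0`, so the
power is differentiable there.
-/

/-- The solution of `v' = (1 - γ) (-(a v + ρ))` with `v 0 = v₀`. -/
noncomputable def linearSolution (a ρ γ v₀ t : ℝ) : ℝ :=
  (v₀ + ρ / a) * exp ((γ - 1) * a * t) - ρ / a

section LinearSolution

variable {a ρ γ v₀ : ℝ}

theorem hasDerivAt_linearSolution (ha : a ≠ 0) (t : ℝ) :
    HasDerivAt (linearSolution a ρ γ v₀) ((1 - γ) * -(a * linearSolution a ρ γ v₀ t + ρ)) t := by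
  have hexp : HasDerivAt (fun s => exp ((γ - 1) * a * s))
      (exp ((γ - 1) * a * t) * ((γ - 1) * a)) t := by
    simpa using ((hasDerivAt_id t).const_mul ((γ - 1) * a)).exp
  refine ((hexp.const_mul (v₀ + ρ / a)).sub_const (ρ / a)).congr_deriv ?_
  rw [linearSolution]
  field_simp
  ring

theorem linearSolution_pos (ha : 0 < a) (hρ : 0 ≤ ρ) (hγ : 1 ≤ γ) (hv₀ : 0 < v₀) {t : ℝ}
    (ht : 0 ≤ t) : 0 < linearSolution a ρ γ v₀ t := by
  have hc : 0 ≤ ρ / a := div_nonneg hρ ha.le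
  have hexp : 1 ≤ exp ((γ - 1) * a * t) :=
    one_le_exp (mul_nonneg (mul_nonneg (sub_nonneg.2 hγ) ha.le) ht)
  rw [linearSolution]
  nlinarith

theorem linearSolution_eq_mul {w : ℝ} (hw : 0 < w) (t : ℝ) :
    linearSolution a ρ γ (w ^ (1 - γ)) t =
      (w * exp (-a * t)) ^ (1 - γ) *
        (1 + ρ / a * (1 - exp (-a * t) ^ (γ - 1)) * w ^ (γ - 1)) := by
  have hE : 0 < exp (-a * t) := exp_pos _
  have hw' : w ^ (1 - γ) * w ^ (γ - 1) = 1 := by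
    rw [← rpow_add hw]; simp
  have hE' : exp (-a * t) ^ (1 - γ) * exp (-a * t) ^ (γ - 1) = 1 := by
    rw [← rpow_add hE]; simp
  have hEexp : exp (-a * t) ^ (1 - γ) = exp ((γ - 1) * a * t) := by
    rw [← exp_mul]; ring_nf
  rw [mul_rpow hw.le hE.le, linearSolution, ← hEexp]
  linear_combination ρ / a * exp (-a * t) ^ (1 - γ) * (exp (-a * t) ^ (γ - 1) - 1) * hw'
    + ρ / a * hE'

theorem rpow_linearSolution_eq (hγ : γ ≠ 1) {w : ℝ} (hw : 0 < w) {t : ℝ}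
    (hpos : 0 < linearSolution a ρ γ (w ^ (1 - γ)) t) :
    linearSolution a ρ γ (w ^ (1 - γ)) t ^ (1 / (1 - γ)) =
      w * exp (-a * t) *
        (1 + ρ / a * (1 - exp (-a * t) ^ (γ - 1)) * w ^ (γ - 1)) ^ (1 / (1 - γ)) := by
  have hwE : 0 < w * exp (-a * t) := mul_pos hw (exp_pos _)
  have hP : 0 < (w * exp (-a * t)) ^ (1 - γ) := rpow_pos_of_pos hwE _
  rw [linearSolution_eq_mul hw] at hpos ⊢
  have hU := (pos_iff_pos_of_mul_pos hpos).1 hP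
  rw [mul_rpow hP.le hU.le, ← rpow_mul hwE.le, mul_one_div_cancel (sub_ne_zero.2 hγ.symm),
    rpow_one]

end LinearSolution

theorem HasDerivAt.rpow_one_div_one_sub_of_linear {v : ℝ → ℝ} {a ρ γ t : ℝ} (hγ : γ ≠ 1)
    (hv : HasDerivAt v ((1 - γ) * -(a * v t + ρ)) t) (hpos : 0 < v t) :
    HasDerivAt (fun s => v s ^ (1 / (1 - γ)))
      (-(a * v t ^ (1 / (1 - γ)) + ρ * (v t ^ (1 / (1 - γ))) ^ γ)) t := by
  have h1γ : 1 - γ ≠ 0 := sub_ne_zero.2 hγ.symm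
  convert hv.rpow_const (p := 1 / (1 - γ)) (Or.inl hpos.ne') using 1
  rw [← rpow_mul hpos.le, show 1 / (1 - γ) * γ = 1 / (1 - γ) - 1 by field_simp; ring,
    rpow_sub_one hpos.ne']
  field_simp

theorem exponential_case_H_solves_ode
    (n γ ρ z : ℝ) (hn : n ∈ Set.Ioo (0 : ℝ) 1) (hγ : 1 < γ)
    (hρ : 0 < ρ) (hz : z ∈ Set.Ico (0 : ℝ) 1)
    (φ H : ℝ → ℝ)
    (hφ : ∀ t, φ t = Real.exp ((n - 1) * t))
    (hH : ∀ t, H t = (1 - z) * φ t *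
      (1 + ρ / (1 - n) * (1 - φ t ^ (γ - 1)) * (1 - z) ^ (γ - 1)) ^ (1 / (1 - γ))) :
    H 0 = 1 - z ∧
      ∀ t ≥ (0 : ℝ), HasDerivAt H (-((1 - n) * H t + ρ * H t ^ γ)) t := by
  have ha : 0 < 1 - n := sub_pos.2 hn.2
  have hw : 0 < 1 - z := sub_pos.2 hz.2
  set v := linearSolution (1 - n) ρ γ ((1 - z) ^ (1 - γ))
  have hvH : ∀ s, 0 < v s → v s ^ (1 / (1 - γ)) = H s := fun s hs => by
    rw [hH, hφ, rpow_linearSolution_eq hγ.ne' hw hs, neg_sub]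
  refine ⟨by simp [hH, hφ], fun t ht => ?_⟩
  have hvt : 0 < v t := linearSolution_pos ha hρ.le hγ.le (rpow_pos_of_pos hw _) ht
  have hv := hasDerivAt_linearSolution (ρ := ρ) (γ := γ) (v₀ := (1 - z) ^ (1 - γ)) ha.ne' t
  have hbern := hv.rpow_one_div_one_sub_of_linear hγ.ne' hvt
  rw [hvH t hvt] at hbern
  refine hbern.congr_of_eventuallyEq ?_
  filter_upwards [hv.continuousAt.eventually (lt_mem_nhds hvt)] with s hs
  exact (hvH s hs).symm
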